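/- Let s, r ≥ 0 and d ≥ 1 be integers, let X ∈ E(s,r,d) have data (λ, Q, P, E), and suppose the rotation T(w) = a·(w − C) + C of order k ≥ 2 about C ∈ ℂ (a a primitive k-th root of unity) leaves X invariant. Then k | d, k | (s − r − 1), the polynomial identities Q(T(w)) = a^s·Q(w), P(T(w)) = a^r·P(w) and E(T(w)) = E(w) hold, and exactly one of the following two alternatives occurs: (i) k | s, k ∤ r, and C is a root of P of multiplicity ν ≥ 1 with k | (ν + 1) and r ≡ ν (mod k); (ii) k | r, k ∤ s, and C is a root of Q of multiplicity ν ≥ 1 with k | (ν − 1) and s ≡ ν (mod k). -/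

import Mathlib

open Polynomial

noncomputable section

/-- The data `(λ, Q, P, E)` of an element `X ∈ E(s,r,d)`:
`λ ≠ 0`, `Q`, `P` monic of degrees `s`, `r` with no common roots,
and `deg E = d`. -/
def EData (s r d : ℕ) (lam : ℂ) (Q P E : Polynomial ℂ) : Prop :=
  lam ≠ 0 ∧ Q.Monic ∧ P.Monic ∧ Q.natDegree = s ∧ P.natDegree = r ∧
    E.natDegree = d ∧ ∀ z : ℂ, ¬ (Q.IsRoot z ∧ P.IsRoot z)

/-- The affine map `T(w) = a·w + b` leaves the vector field with data `(λ,Q,P,E)`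
invariant: `Q(aw+b)·P(w)·exp(E(aw+b)) = a·Q(w)·P(aw+b)·exp(E(w))` for all `w`. -/
def LeavesInv (Q P E : Polynomial ℂ) (a b : ℂ) : Prop :=
  ∀ w : ℂ,
    Q.eval (a * w + b) * P.eval w * Complex.exp (E.eval (a * w + b)) =
      a * Q.eval w * P.eval (a * w + b) * Complex.exp (E.eval w)

/-!
Write `L = a X + (c - a c)` for the rotation. The invariance identity reads
`(Q ∘ L) P e^(E ∘ L - E) = a Q (P ∘ L)`; comparing degrees in the Wronskian of the two
polynomial factors forces `(E ∘ L - E)' = 0`, and since `L` fixes `c`, `E ∘ L = E`.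
Coprimality of `Q` and `P` then gives `Q ∣ Q ∘ L` and `P ∣ P ∘ L`, so `Q ∘ L = a^s Q` and
`P ∘ L = a^r P` by comparing leading coefficients, whence `a^s = a^(r+1)`. Factoring out
`(X - c)^ν` shows that the multiplicity `ν` of `c` as a root of `Q` (resp. `P`) is `≡ s`
(resp. `≡ r`) modulo `k`. As `c` is not a common root, one of these multiplicities vanishes,
which decides between the two alternatives.
-/

lemma leadingCoeff_comp_C_mul_X_add_C {R : Type*} [Semiring R] [NoZeroDivisors R] (p : R[X])
    {a : R} (b : R) (ha : a ≠ 0) :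
    (p.comp (C a * X + C b)).leadingCoeff = p.leadingCoeff * a ^ p.natDegree := by
  rw [leadingCoeff_comp (by rw [natDegree_linear ha]; exact one_ne_zero), leadingCoeff_linear ha]

lemma comp_C_mul_X_add_C_ne_zero {R : Type*} [Semiring R] [NoZeroDivisors R] {p : R[X]}
    {a : R} (b : R) (ha : a ≠ 0) (hp : p ≠ 0) : p.comp (C a * X + C b) ≠ 0 := by
  rw [← leadingCoeff_ne_zero, leadingCoeff_comp_C_mul_X_add_C p b ha]
  exact mul_ne_zero (leadingCoeff_ne_zero.mpr hp) (pow_ne_zero _ ha)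

lemma comp_C_mul_X_add_C_eq_C_pow_mul_of_dvd {K : Type*} [Field K] {p : K[X]} {a : K} (b : K)
    (ha : a ≠ 0) (hp : p.Monic) (hdvd : p ∣ p.comp (C a * X + C b)) :
    p.comp (C a * X + C b) = C (a ^ p.natDegree) * p := by
  have hdeg : (p.comp (C a * X + C b)).natDegree = p.natDegree := by
    rw [natDegree_comp, natDegree_linear ha, mul_one]
  rw [eq_leadingCoeff_mul_of_monic_of_dvd_of_natDegree_le hp hdvd hdeg.le,
    leadingCoeff_comp_C_mul_X_add_C p b ha, hp.leadingCoeff, one_mul]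

lemma IsPrimitiveRoot.dvd_natDegree_of_comp_eq_self {K : Type*} [Field K] {p : K[X]} {a : K}
    {k : ℕ} (hprim : IsPrimitiveRoot a k) (b : K) (hp : p.comp (C a * X + C b) = p) :
    k ∣ p.natDegree := by
  rcases eq_or_ne p 0 with rfl | hp0
  · simp
  rcases eq_or_ne a 0 with rfl | ha
  · simp [(by simpa using (congrArg natDegree hp).symm : p.natDegree = 0)]
  rw [← hprim.pow_eq_one_iff_dvd]
  have hlc := congrArg leadingCoeff hp
  rw [leadingCoeff_comp_C_mul_X_add_C p b ha] at hlc
  exact (mul_eq_left₀ (leadingCoeff_ne_zero.mpr hp0)).mp hlc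

lemma IsPrimitiveRoot.modEq_of_pow_eq_pow {M : Type*} [CommMonoid M] {ζ : M} {k i j : ℕ}
    (hprim : IsPrimitiveRoot ζ k) (hk : k ≠ 0) (hij : ζ ^ i = ζ ^ j) : i ≡ j [MOD k] := by
  rw [hprim.eq_orderOf]
  exact (hprim.isOfFinOrder hk).pow_eq_pow_iff_modEq.mp hij

theorem derivative_eq_zero_of_eval_mul_exp_eq {G H F : ℂ[X]} (hG : G ≠ 0) (hH : H ≠ 0)
    (h : ∀ w, G.eval w * Complex.exp (F.eval w) = H.eval w) : derivative F = 0 := by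
  have hW : wronskian G H = G * H * derivative F := by
    refine Polynomial.funext fun w => ?_
    have hGF : HasDerivAt (fun w => G.eval w * Complex.exp (F.eval w))
        ((derivative G).eval w * Complex.exp (F.eval w) +
          G.eval w * (Complex.exp (F.eval w) * (derivative F).eval w)) w :=
      (G.hasDerivAt w).mul (F.hasDerivAt w).cexp
    rw [funext h] at hGF
    simp only [wronskian, eval_sub, eval_mul, (H.hasDerivAt w).unique hGF, ← h w]
    ring
  by_contra hF
  have hW0 : wronskian G H ≠ 0 := by rw [hW]; exact mul_ne_zero (mul_ne_zero hG hH) hF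
  have hlt := natDegree_wronskian_lt_add hW0
  rw [hW, natDegree_mul (mul_ne_zero hG hH) hF, natDegree_mul hG hH] at hlt
  omega

lemma comp_eq_C_pow_mul_of_isCoprime {K : Type*} [Field K] {Q P : K[X]} {a : K} (b : K)
    (ha : a ≠ 0) (hQ : Q.Monic) (hP : P.Monic) (hQP : IsCoprime Q P)
    (h : Q.comp (C a * X + C b) * P = C a * Q * P.comp (C a * X + C b)) :
    Q.comp (C a * X + C b) = C (a ^ Q.natDegree) * Q ∧
      P.comp (C a * X + C b) = C (a ^ P.natDegree) * P := by
  have hPQ : IsCoprime P (C a * Q) :=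
    (isCoprime_mul_unit_left_right (isUnit_C.mpr ha.isUnit) P Q).mpr hQP.symm
  refine ⟨comp_C_mul_X_add_C_eq_C_pow_mul_of_dvd b ha hQ ?_,
    comp_C_mul_X_add_C_eq_C_pow_mul_of_dvd b ha hP ?_⟩
  · exact hQP.dvd_of_dvd_mul_right ⟨C a * P.comp (C a * X + C b), by rw [h]; ring⟩
  · exact hPQ.dvd_of_dvd_mul_left ⟨Q.comp (C a * X + C b), by rw [← h]; ring⟩

lemma pow_natDegree_eq_pow_natDegree_succ {K : Type*} [Field K] {Q P : K[X]} {a : K} (b : K)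
    (hQ : Q ≠ 0) (hP : P ≠ 0) (hQL : Q.comp (C a * X + C b) = C (a ^ Q.natDegree) * Q)
    (hPL : P.comp (C a * X + C b) = C (a ^ P.natDegree) * P)
    (h : Q.comp (C a * X + C b) * P = C a * Q * P.comp (C a * X + C b)) :
    a ^ Q.natDegree = a ^ (P.natDegree + 1) := by
  rw [hQL, hPL] at h
  refine C_injective (mul_right_cancel₀ (mul_ne_zero hQ hP) ?_)
  rw [pow_succ', C_mul]
  linear_combination h

lemma comp_eq_of_leavesInv {Q P E : ℂ[X]} {a c : ℂ} (ha : a ≠ 0) (hQ : Q ≠ 0) (hP : P ≠ 0)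
    (hinv : LeavesInv Q P E a (c - a * c)) :
    E.comp (C a * X + C (c - a * c)) = E ∧
      Q.comp (C a * X + C (c - a * c)) * P = C a * Q * P.comp (C a * X + C (c - a * c)) := by
  set L : ℂ[X] := C a * X + C (c - a * c)
  have hL : ∀ w, L.eval w = a * w + (c - a * c) := fun w => by simp [L]
  have hexp : ∀ w, (Q.comp L * P).eval w * Complex.exp ((E.comp L - E).eval w) =
      (C a * Q * P.comp L).eval w := by
    intro w
    rw [eval_sub, Complex.exp_sub, mul_div_assoc', div_eq_iff (Complex.exp_ne_zero _)]
    simp only [eval_mul, eval_comp, eval_C, hL]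
    linear_combination hinv w
  have hF := derivative_eq_zero_of_eval_mul_exp_eq
    (mul_ne_zero (comp_C_mul_X_add_C_ne_zero _ ha hQ) hP)
    (mul_ne_zero (mul_ne_zero (C_ne_zero.mpr ha) hQ) (comp_C_mul_X_add_C_ne_zero _ ha hP)) hexp
  have hEL : E.comp L = E := by
    have hconst := eq_C_of_natDegree_eq_zero (derivative_eq_zero.mp hF)
    have hc : (E.comp L - E).eval c = 0 := by simp [eval_comp, hL]
    rw [hconst, eval_C] at hc
    rw [← sub_eq_zero, hconst, hc, C_0]
  refine ⟨hEL, Polynomial.funext fun w => ?_⟩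
  simpa [hEL] using hexp w

lemma pow_rootMultiplicity_eq_of_comp_eq {R : Type*} [CommRing R] [IsDomain R] {p : R[X]}
    {a c m : R} (hp : p ≠ 0) (h : p.comp (C a * X + C (c - a * c)) = C m * p) :
    a ^ p.rootMultiplicity c = m := by
  set L : R[X] := C a * X + C (c - a * c)
  set ν := p.rootMultiplicity c
  set q := p /ₘ (X - C c) ^ ν
  have hfac : (X - C c) ^ ν * q = p := pow_mul_divByMonic_rootMultiplicity_eq p c
  have hXc : (X - C c).comp L = C a * (X - C c) := by
    simp only [L, sub_comp, X_comp, C_comp, C_sub, C_mul]; ring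
  have hq : (X - C c) ^ ν * (C (a ^ ν) * q.comp L) = (X - C c) ^ ν * (C m * q) :=
    calc _ = ((X - C c) ^ ν * q).comp L := by rw [mul_comp, pow_comp, hXc, mul_pow, C_pow]; ring
      _ = C m * ((X - C c) ^ ν * q) := by rw [hfac, h]
      _ = _ := by ring
  have hqc := congrArg (eval c) (mul_left_cancel₀ (pow_ne_zero ν (X_sub_C_ne_zero c)) hq)
  simp only [eval_mul, eval_C, eval_comp, L, eval_add, eval_X] at hqc
  rw [show a * c + (c - a * c) = c by ring] at hqc
  exact mul_right_cancel₀ (eval_divByMonic_pow_rootMultiplicity_ne_zero c hp) hqc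

lemma xor_of_modEq_of_eq_zero_or_eq_zero {k s r p q : ℕ} (hk : 2 ≤ k)
    (hsr : s ≡ r + 1 [MOD k]) (hp : p ≡ r [MOD k]) (hq : q ≡ s [MOD k]) (hpq : p = 0 ∨ q = 0) :
    Xor' (k ∣ s ∧ ¬ k ∣ r ∧ 1 ≤ p ∧ k ∣ (p + 1) ∧ r % k = p % k)
      (k ∣ r ∧ ¬ k ∣ s ∧ 1 ≤ q ∧ k ∣ (q - 1) ∧ s % k = q % k) := by
  have : Fact (1 < k) := ⟨hk⟩
  rw [← ZMod.natCast_eq_natCast_iff] at hsr hp hq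
  push_cast at hsr
  simp only [← ZMod.natCast_eq_zero_iff, ← ZMod.natCast_eq_natCast_iff']
  rcases hpq with rfl | rfl
  · have hr : (r : ZMod k) = 0 := by rw [← hp, Nat.cast_zero]
    have hq1 : (q : ZMod k) = 1 := by rw [hq, hsr, hr, zero_add]
    have hq0 : 1 ≤ q := Nat.one_le_iff_ne_zero.mpr (by rintro rfl; simp_all)
    refine Or.inr ⟨⟨hr, by simp [hsr, hr], hq0, ?_, hq.symm⟩, by omega⟩
    rw [Nat.cast_sub hq0, hq1, Nat.cast_one, sub_self]
  · have hs : (s : ZMod k) = 0 := by rw [← hq, Nat.cast_zero]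
    have hr : (r : ZMod k) = -1 := by linear_combination hs - hsr
    have hp0 : 1 ≤ p := Nat.one_le_iff_ne_zero.mpr (by rintro rfl; simp_all)
    exact Or.inl ⟨⟨hs, by simp [hr], hp0, by push_cast; rw [hp, hr, neg_add_cancel], hp.symm⟩,
      by omega⟩

theorem stmt4_general (s r d : ℕ)
    (lam : ℂ) (Q P E : Polynomial ℂ) (hX : EData s r d lam Q P E)
    (k : ℕ) (hk : 2 ≤ k) (a : ℂ) (hprim : IsPrimitiveRoot a k) (c : ℂ)
    (hinv : LeavesInv Q P E a (c - a * c)) :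
    (k : ℤ) ∣ (d : ℤ) ∧ (k : ℤ) ∣ ((s : ℤ) - r - 1) ∧
    Q.comp (C a * X + C (c - a * c)) = C (a ^ s) * Q ∧
    P.comp (C a * X + C (c - a * c)) = C (a ^ r) * P ∧
    E.comp (C a * X + C (c - a * c)) = E ∧
    Xor'
      (k ∣ s ∧ ¬ k ∣ r ∧ 1 ≤ P.rootMultiplicity c ∧
        k ∣ (P.rootMultiplicity c + 1) ∧ r % k = P.rootMultiplicity c % k)
      (k ∣ r ∧ ¬ k ∣ s ∧ 1 ≤ Q.rootMultiplicity c ∧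
        k ∣ (Q.rootMultiplicity c - 1) ∧ s % k = Q.rootMultiplicity c % k) := by
  obtain ⟨-, hQm, hPm, rfl, rfl, rfl, hroots⟩ := hX
  have hk0 : k ≠ 0 := by omega
  have ha : a ≠ 0 := hprim.ne_zero hk0
  have hQP : IsCoprime Q P := (isCoprime_iff_aeval_ne_zero_of_isAlgClosed ℂ ℂ Q P).mpr
    fun z => by simpa only [coe_aeval_eq_eval, IsRoot.def, ← not_and_or] using hroots z
  obtain ⟨hEL, hQPL⟩ := comp_eq_of_leavesInv ha hQm.ne_zero hPm.ne_zero hinv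
  obtain ⟨hQL, hPL⟩ := comp_eq_C_pow_mul_of_isCoprime _ ha hQm hPm hQP hQPL
  have hsr := hprim.modEq_of_pow_eq_pow hk0
    (pow_natDegree_eq_pow_natDegree_succ _ hQm.ne_zero hPm.ne_zero hQL hPL hQPL)
  have hνP := hprim.modEq_of_pow_eq_pow hk0 (pow_rootMultiplicity_eq_of_comp_eq hPm.ne_zero hPL)
  have hνQ := hprim.modEq_of_pow_eq_pow hk0 (pow_rootMultiplicity_eq_of_comp_eq hQm.ne_zero hQL)
  have hν0 : P.rootMultiplicity c = 0 ∨ Q.rootMultiplicity c = 0 :=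
    ((not_and_or.mp (hroots c)).imp rootMultiplicity_eq_zero rootMultiplicity_eq_zero).symm
  refine ⟨Int.natCast_dvd_natCast.mpr (hprim.dvd_natDegree_of_comp_eq_self _ hEL), ?_, hQL, hPL,
    hEL, xor_of_modEq_of_eq_zero_or_eq_zero hk hsr hνP hνQ hν0⟩
  simpa [sub_sub] using (Nat.modEq_iff_dvd.mp hsr.symm)

/-- if the rotation `T(w) = a·(w−C) + C` of order `k ≥ 2` about
`C` leaves `X ∈ E(s,r,d)` invariant, then `k ∣ d`, `k ∣ (s−r−1)`, the
polynomial identities hold, and exactly one of the two alternatives occurs: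
`C` is a pole (root of `P`) of multiplicity `ν` with `k ∣ (ν+1)` and
`r ≡ ν (mod k)`, or `C` is a zero (root of `Q`) of multiplicity `ν` with
`k ∣ (ν−1)` and `s ≡ ν (mod k)`. -/
theorem stmt4 (s r d : ℕ) (hd : 1 ≤ d)
    (lam : ℂ) (Q P E : Polynomial ℂ) (hX : EData s r d lam Q P E)
    (k : ℕ) (hk : 2 ≤ k) (a : ℂ) (hprim : IsPrimitiveRoot a k) (c : ℂ)
    (hinv : LeavesInv Q P E a (c - a * c)) :
    (k : ℤ) ∣ (d : ℤ) ∧ (k : ℤ) ∣ ((s : ℤ) - r - 1) ∧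
    Q.comp (C a * X + C (c - a * c)) = C (a ^ s) * Q ∧
    P.comp (C a * X + C (c - a * c)) = C (a ^ r) * P ∧
    E.comp (C a * X + C (c - a * c)) = E ∧
    Xor'
      (k ∣ s ∧ ¬ k ∣ r ∧ 1 ≤ P.rootMultiplicity c ∧
        k ∣ (P.rootMultiplicity c + 1) ∧ r % k = P.rootMultiplicity c % k)
      (k ∣ r ∧ ¬ k ∣ s ∧ 1 ≤ Q.rootMultiplicity c ∧
        k ∣ (Q.rootMultiplicity c - 1) ∧ s % k = Q.rootMultiplicity c % k) :=
  stmt4_general s r d lam Q P E hX k hk a hprim c hinv
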